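/- Let E be an m × n real matrix with nonnegative entries and let S be an n × n real matrix such that E * S = 0 and all off-diagonal entries of S are nonnegative (s_{jk} ≥ 0 for j ≠ k). Fix a row index i of E, and let J_i = {j : e_{ij} ≠ 0} and J_i^c = {k : e_{ik} = 0}. Then s_{jk} = 0 for every j ∈ J_i and every k ∈ J_i^c. -/

import Mathlib

open Matrix

/-- All summands of `(v ᵥ* S) k` are nonnegative (the diagonal one is `v k * S k k = 0`),
so a zero sum forces each of them to vanish. -/
theorem Matrix.apply_eq_zero_of_vecMul_apply_eq_zero {ι R : Type*} [Fintype ι] [Semiring R]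
    [PartialOrder R] [IsOrderedRing R] [NoZeroDivisors R] {v : ι → R} {S : Matrix ι ι R}
    (hv : 0 ≤ v) (hS : ∀ j k, j ≠ k → 0 ≤ S j k) {j k : ι} (hvS : (v ᵥ* S) k = 0)
    (hj : v j ≠ 0) (hk : v k = 0) : S j k = 0 := by
  have hterm_nonneg : ∀ l ∈ Finset.univ, 0 ≤ v l * S l k := by
    intro l _
    by_cases hlk : l = k
    · simp [hlk, hk]
    · exact mul_nonneg (hv l) (hS l k hlk)
  have hterm : v j * S j k = 0 :=
    (Finset.sum_eq_zero_iff_of_nonneg hterm_nonneg).mp hvS j (Finset.mem_univ j)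
  exact (mul_eq_zero.mp hterm).resolve_left hj

theorem stmt0 {m n : ℕ} (E : Matrix (Fin m) (Fin n) ℝ) (S : Matrix (Fin n) (Fin n) ℝ)
    (hE : ∀ i j, 0 ≤ E i j) (hES : E * S = 0)
    (hoff : ∀ j k, j ≠ k → 0 ≤ S j k)
    (i : Fin m) :
    ∀ j k, E i j ≠ 0 → E i k = 0 → S j k = 0 := by
  intro j k hj hk
  have hrow : (E i ᵥ* S) k = 0 := congrFun (congrFun hES i) k
  exact apply_eq_zero_of_vecMul_apply_eq_zero (hE i) hoff hrow hj hk
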